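/- arXiv:2408.02466 — 4 statements merged into one kernel-verified Lean document; each statement's English description precedes it below -/
import Mathlib

section
/- Let m > 1, q ∈ (0,1) with m + q > 2, N ≥ 1, K > 0, ν = (m-1)/(m+q-2), μ = m+q-2. The planar vector field R(y,z) = ((m-1)y + Kz - y² - (2+Ny)·max(z,0)^ν, μ z (y - (2/(m-1))·max(z,0)^ν)) has exactly three zeros: P₀ = (0,0), P₁ = (m-1,0), and P₂ = (2 Z_K^ν/(m-1), Z_K), where Z_K = (K(m-1)²/(2[N(m-1)+2]))^{μ/(m-q)}. -/
/-!
On `z ≤ 0` the vector field is polynomial: the second component forces `y = 0` or `z = 0`, and the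
first one then leaves only `P₀` and `P₁`. On `z > 0` the second component forces
`y = 2 z^ν / (m - 1)`; substituting, the terms `(m - 1) y` and `2 z^ν` cancel, and the first
component becomes `2 (N (m - 1) + 2) z^(2ν) = K (m - 1)² z`, i.e. `z^(2ν - 1) = C` with
`C = K (m - 1)² / (2 (N (m - 1) + 2)) > 0`. Since
`2ν - 1 = (m - q)/μ ≠ 0`, this has the unique positive root `Z_K = C^(μ/(m - q))`.
-/

open Real Set

noncomputable def vectorFieldR (m K N μ ν : ℝ) (p : ℝ × ℝ) : ℝ × ℝ :=
  ((m - 1) * p.1 + K * p.2 - p.1 ^ 2 - (2 + N * p.1) * (max p.2 0) ^ ν,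
    μ * p.2 * (p.1 - (2 / (m - 1)) * (max p.2 0) ^ ν))

section VectorFieldR

variable {m K N μ ν y z : ℝ}

lemma rpow_mul_self_eq_rpow_two_mul_sub_one_mul (hz : 0 < z) (ν : ℝ) :
    z ^ ν * z ^ ν = z ^ (2 * ν - 1) * z := by
  rw [← rpow_add hz, ← rpow_add_one hz.ne']
  ring_nf

lemma vectorFieldR_eq_zero_iff_of_nonpos (hμ : μ ≠ 0) (hν : ν ≠ 0) (hK : K ≠ 0) (hz : z ≤ 0) :
    vectorFieldR m K N μ ν (y, z) = 0 ↔ z = 0 ∧ (y = 0 ∨ y = m - 1) := by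
  simp only [vectorFieldR, Prod.mk_eq_zero, max_eq_right hz, zero_rpow hν]
  rcases eq_or_ne z 0 with rfl | hz0
  · have : (m - 1) * y - y ^ 2 = y * (m - 1 - y) := by ring
    simp [this, sub_eq_zero, eq_comm (a := m - 1)]
  · simp only [hz0, false_and, iff_false, not_and]
    intro h1 h2
    have hy : y = 0 := by simpa [hμ, hz0] using h2
    simp [hy, hK, hz0] at h1

lemma vectorFieldR_eq_zero_iff_of_pos (hm : m - 1 ≠ 0) (hμ : μ ≠ 0) (hD : N * (m - 1) + 2 ≠ 0)
    (hz : 0 < z) :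
    vectorFieldR m K N μ ν (y, z) = 0 ↔
      y = 2 / (m - 1) * z ^ ν ∧ z ^ (2 * ν - 1) = K * (m - 1) ^ 2 / (2 * (N * (m - 1) + 2)) := by
  simp only [vectorFieldR, Prod.mk_eq_zero, max_eq_left hz.le, mul_eq_zero, hμ, hz.ne', false_or,
    sub_eq_zero]
  rw [and_comm]
  refine and_congr_right ?_
  rintro rfl
  have hpow : z ^ (2 * ν - 1) = K * (m - 1) ^ 2 / (2 * (N * (m - 1) + 2)) ↔
      2 * (N * (m - 1) + 2) * (z ^ ν) ^ 2 = K * (m - 1) ^ 2 * z := by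
    rw [pow_two (z ^ ν), rpow_mul_self_eq_rpow_two_mul_sub_one_mul hz,
      eq_div_iff (by simpa using hD), ← mul_left_inj' hz.ne']
    constructor <;> intro h <;> linarith
  rw [hpow]
  field_simp
  constructor <;> intro h <;> linear_combination -h

end VectorFieldR

theorem stmt2_general (m q K N μ ν ZK : ℝ)
    (hm : 1 < m) (hq1 : q < 1) (hmq : 2 < m + q)
    (hN : 1 ≤ N) (hK : 0 < K)
    (hμ : μ = m + q - 2) (hν : ν = (m - 1) / μ)
    (hZK : ZK = (K * (m - 1) ^ 2 / (2 * (N * (m - 1) + 2))) ^ (μ / (m - q))) :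
    {p : ℝ × ℝ |
        (m - 1) * p.1 + K * p.2 - p.1 ^ 2 - (2 + N * p.1) * (max p.2 0) ^ ν = 0 ∧
        μ * p.2 * (p.1 - (2 / (m - 1)) * (max p.2 0) ^ ν) = 0}
      = {((0 : ℝ), (0 : ℝ)), (m - 1, 0), (2 * ZK ^ ν / (m - 1), ZK)} := by
  have hμ0 : 0 < μ := by rw [hμ]; linarith
  have hν0 : 0 < ν := by rw [hν]; exact div_pos (by linarith) hμ0
  have hD : 0 < N * (m - 1) + 2 := by nlinarith
  have hC : 0 < K * (m - 1) ^ 2 / (2 * (N * (m - 1) + 2)) := by positivity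
  have hZK0 : 0 < ZK := hZK ▸ rpow_pos_of_pos hC _
  have hexp : 2 * ν - 1 = (m - q) / μ := by rw [hν]; field_simp; linarith
  have hexp0 : 2 * ν - 1 ≠ 0 := by rw [hexp]; exact div_ne_zero (by linarith) hμ0.ne'
  ext ⟨y, z⟩
  rw [mem_ofPred_eq, ← Prod.mk_eq_zero]
  change vectorFieldR m K N μ ν (y, z) = 0 ↔ _
  simp only [mem_insert_iff, mem_singleton_iff, Prod.mk.injEq]
  rcases le_or_gt z 0 with hz | hz
  · rw [vectorFieldR_eq_zero_iff_of_nonpos hμ0.ne' hν0.ne' hK.ne' hz]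
    have := (hz.trans_lt hZK0).ne
    tauto
  · rw [vectorFieldR_eq_zero_iff_of_pos (by linarith) hμ0.ne' hD.ne' hz,
      @eq_comm _ (z ^ _), ← rpow_inv_eq hC.le hz.le hexp0, hexp, inv_div, ← hZK]
    constructor
    · rintro ⟨rfl, rfl⟩
      exact Or.inr (Or.inr ⟨by ring, rfl⟩)
    · rintro (⟨-, h⟩ | ⟨-, h⟩ | ⟨rfl, rfl⟩)
      · exact absurd h hz.ne'
      · exact absurd h hz.ne'
      · exact ⟨by ring, rfl⟩

theorem stmt2 (m q K N μ ν ZK : ℝ)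
    (hm : 1 < m) (hq0 : 0 < q) (hq1 : q < 1) (hmq : 2 < m + q)
    (hN : 1 ≤ N) (hK : 0 < K)
    (hμ : μ = m + q - 2) (hν : ν = (m - 1) / μ)
    (hZK : ZK = (K * (m - 1) ^ 2 / (2 * (N * (m - 1) + 2))) ^ (μ / (m - q))) :
    {p : ℝ × ℝ |
        (m - 1) * p.1 + K * p.2 - p.1 ^ 2 - (2 + N * p.1) * (max p.2 0) ^ ν = 0 ∧
        μ * p.2 * (p.1 - (2 / (m - 1)) * (max p.2 0) ^ ν) = 0}
      = {((0 : ℝ), (0 : ℝ)), (m - 1, 0), (2 * ZK ^ ν / (m - 1), ZK)} :=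
  stmt2_general m q K N μ ν ZK hm hq1 hmq hN hK hμ hν hZK
end

section
/- Let m > 1, q ∈ (0,1), m+q > 2, N ≥ 1. There exist 0 < K_u < K_f < K_s such that: (i) for K ≤ K_u both eigenvalues of the Jacobian of S_K at Q₂ are real and positive; (ii) for K ∈ (K_u, K_f) they are complex conjugates with positive real part; (iii) for K ∈ (K_f, K_s) they are complex conjugates with negative real part; (iv) for K ≥ K_s both eigenvalues are real and negative. Here K_f is characterized by C₁(K_f) = C₂. -/
open Real Filter Set Topology

/-- Quadratic with real coefficients, positive product, nonnegative discriminant: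
roots are real with sign of `b`. -/
lemma quad_real_aux (b c : ℝ) (hc : 0 < c) (hd : 4 * c ≤ b ^ 2) (z : ℂ)
    (hz : z ^ 2 - (b : ℂ) * z + (c : ℂ) = 0) :
    z.im = 0 ∧ ((0 < b → 0 < z.re) ∧ (b < 0 → z.re < 0)) := by
  set r := Real.sqrt (b ^ 2 - 4 * c) with hr
  have hr0 : 0 ≤ r := Real.sqrt_nonneg _
  have hr2 : r ^ 2 = b ^ 2 - 4 * c := Real.sq_sqrt (by linarith)
  set r1 : ℝ := (b + r) / 2 with hr1
  set r2 : ℝ := (b - r) / 2 with hr2'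
  have hsum : r1 + r2 = b := by rw [hr1, hr2']; ring
  have hprod : r1 * r2 = c := by rw [hr1, hr2']; nlinarith [hr2]
  clear_value r1 r2
  have hfac : (z - (r1 : ℂ)) * (z - (r2 : ℂ)) = 0 := by
    have heq : (z - (r1 : ℂ)) * (z - (r2 : ℂ)) = z ^ 2 - (b : ℂ) * z + (c : ℂ) := by
      rw [← hsum, ← hprod]; push_cast; ring
    rw [heq, hz]
  have hrle : r < |b| := by
    have : r ^ 2 < b ^ 2 := by rw [hr2]; linarith
    have hb : r ^ 2 < |b| ^ 2 := by rwa [sq_abs]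
    exact lt_of_pow_lt_pow_left₀ 2 (abs_nonneg b) hb
  rcases mul_eq_zero.1 hfac with h | h
  · have hz1 : z = (r1 : ℂ) := by linear_combination h
    rw [hz1]
    refine ⟨by simp, ?_, ?_⟩ <;> intro hb <;> simp only [Complex.ofReal_re]
    · rw [hr1]; rw [abs_of_pos hb] at hrle; linarith
    · rw [hr1]; rw [abs_of_neg hb] at hrle; linarith
  · have hz1 : z = (r2 : ℂ) := by linear_combination h
    rw [hz1]
    refine ⟨by simp, ?_, ?_⟩ <;> intro hb <;> simp only [Complex.ofReal_re]
    · rw [hr2']; rw [abs_of_pos hb] at hrle; linarith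
    · rw [hr2']; rw [abs_of_neg hb] at hrle; linarith

/-- Quadratic with real coefficients and negative discriminant: complex conjugate
roots with real part `b/2`. -/
lemma quad_complex_aux (b c : ℝ) (hd : b ^ 2 < 4 * c) (z : ℂ)
    (hz : z ^ 2 - (b : ℂ) * z + (c : ℂ) = 0) :
    z.im ≠ 0 ∧ z.re = b / 2 := by
  set s := Real.sqrt (4 * c - b ^ 2) with hs
  have hs0 : 0 < s := Real.sqrt_pos.2 (by linarith)
  have hs2 : s ^ 2 = 4 * c - b ^ 2 := Real.sq_sqrt (by linarith)
  set w : ℂ := ⟨b / 2, s / 2⟩ with hw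
  have hsum : w + (starRingEnd ℂ) w = (b : ℂ) := by
    apply Complex.ext <;> simp [hw]
  have hprod : w * (starRingEnd ℂ) w = (c : ℂ) := by
    apply Complex.ext
    · simp [hw, Complex.mul_re]; nlinarith [hs2]
    · simp [hw, Complex.mul_im]; ring
  have hfac : (z - w) * (z - (starRingEnd ℂ) w) = 0 := by
    have : (z - w) * (z - (starRingEnd ℂ) w) = z ^ 2 - (b : ℂ) * z + (c : ℂ) := by
      rw [show (z - w) * (z - (starRingEnd ℂ) w)
          = z ^ 2 - (w + (starRingEnd ℂ) w) * z + w * (starRingEnd ℂ) w by ring, hsum, hprod]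
    rw [this, hz]
  rcases mul_eq_zero.1 hfac with h | h
  · have hz1 : z = w := by linear_combination h
    rw [hz1]
    refine ⟨?_, ?_⟩
    · show s / 2 ≠ 0; positivity
    · rfl
  · have hz1 : z = (starRingEnd ℂ) w := by linear_combination h
    rw [hz1]
    refine ⟨?_, ?_⟩
    · show -(s / 2) ≠ 0
      simp only [ne_eq, neg_eq_zero]
      positivity
    · rfl

set_option maxHeartbeats 1000000 in
theorem stmt10 (m q N : ℝ)
    (hm : 1 < m) (hq0 : 0 < q) (hq1 : q < 1) (hmq : 2 < m + q) (hN : 1 ≤ N) :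
    let C1 : ℝ → ℝ := fun K =>
      Real.sqrt (m - 1) * K ^ (-(m - 1) / (m - q)) *
        (2 * (N * (m - 1) + 2) / (m - 1) ^ 2) ^ ((m + q - 2) / (2 * (m - q)))
    let C2 : ℝ := (N * (m - 1) + 2 * m + 2) / Real.sqrt (2 * (m - 1) * (N * (m - 1) + 2))
    ∃ Ku Kf Ks : ℝ, 0 < Ku ∧ Ku < Kf ∧ Kf < Ks ∧ C1 Kf = C2 ∧
      (∀ K, 0 < K → K ≤ Ku → ∀ z : ℂ,
        z ^ 2 - ((C1 K - C2 : ℝ) : ℂ) * z + (((m - q) / (m - 1) : ℝ) : ℂ) = 0 →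
          z.im = 0 ∧ 0 < z.re) ∧
      (∀ K, Ku < K → K < Kf → ∀ z : ℂ,
        z ^ 2 - ((C1 K - C2 : ℝ) : ℂ) * z + (((m - q) / (m - 1) : ℝ) : ℂ) = 0 →
          z.im ≠ 0 ∧ 0 < z.re) ∧
      (∀ K, Kf < K → K < Ks → ∀ z : ℂ,
        z ^ 2 - ((C1 K - C2 : ℝ) : ℂ) * z + (((m - q) / (m - 1) : ℝ) : ℂ) = 0 →
          z.im ≠ 0 ∧ z.re < 0) ∧
      (∀ K, Ks ≤ K → ∀ z : ℂ,
        z ^ 2 - ((C1 K - C2 : ℝ) : ℂ) * z + (((m - q) / (m - 1) : ℝ) : ℂ) = 0 →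
          z.im = 0 ∧ z.re < 0) := by
  intro C1 C2
  have hm1 : (0:ℝ) < m - 1 := by linarith
  have hmq' : (0:ℝ) < m - q := by linarith
  set c : ℝ := (m - q) / (m - 1) with hc
  have hcpos : 0 < c := by positivity
  set D : ℝ := 2 * Real.sqrt c with hD
  have hDpos : 0 < D := by positivity
  have hD2 : D ^ 2 = 4 * c := by
    rw [hD, mul_pow, Real.sq_sqrt hcpos.le]; ring
  -- A, positivity of C2 and C2 > D
  set A : ℝ := N * (m - 1) + 2 with hA
  have hApos : 0 < A := by positivity
  have hC2pos : 0 < C2 := by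
    have : (0:ℝ) < 2 * (m - 1) * A := by positivity
    have hs : 0 < Real.sqrt (2 * (m - 1) * (N * (m - 1) + 2)) := Real.sqrt_pos.2 (by rw [← hA]; exact this)
    exact div_pos (by nlinarith) hs
  have hDC2 : D < C2 := by
    have hY : (0:ℝ) < 2 * (m - 1) * A := by positivity
    have hC2sq : C2 ^ 2 = (N * (m - 1) + 2 * m + 2) ^ 2 / (2 * (m - 1) * A) := by
      rw [show C2 = (N * (m - 1) + 2 * m + 2) / Real.sqrt (2 * (m - 1) * (N * (m - 1) + 2)) from rfl,
        div_pow, Real.sq_sqrt (by rw [← hA]; exact hY.le), ← hA]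
    have hlt : D ^ 2 < C2 ^ 2 := by
      rw [hD2, hC2sq, lt_div_iff₀ hY]
      have h4c : 4 * c * (2 * (m - 1) * A) = 8 * (m - q) * A := by
        rw [hc]; field_simp; ring
      rw [h4c]
      have hNm : N * (m - 1) + 2 * m + 2 = A + 2 * m := by rw [hA]; ring
      rw [hNm]
      nlinarith [sq_nonneg (A - 2 * (m - 2 * q)), hApos, hq0, hmq']
    exact lt_of_pow_lt_pow_left₀ 2 hC2pos.le hlt
  -- structure of C1 and its inverse
  set B : ℝ := (2 * (N * (m - 1) + 2) / (m - 1) ^ 2) ^ ((m + q - 2) / (2 * (m - q))) with hB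
  have hBpos : 0 < B := Real.rpow_pos_of_pos (by positivity) _
  set a : ℝ := Real.sqrt (m - 1) * B with ha
  have hapos : 0 < a := by positivity
  set e : ℝ := -(m - 1) / (m - q) with he
  have heneg : e < 0 := by
    rw [he]; exact div_neg_of_neg_of_pos (by linarith) hmq'
  have hC1 : ∀ K : ℝ, C1 K = a * K ^ e := by
    intro K
    show Real.sqrt (m - 1) * K ^ (-(m - 1) / (m - q)) * B = a * K ^ e
    rw [ha, ← he]; ring
  set Kof : ℝ → ℝ := fun y => (y / a) ^ (1 / e) with hKof
  have hKofpos : ∀ y : ℝ, 0 < y → 0 < Kof y := fun y hy =>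
    Real.rpow_pos_of_pos (by positivity) _
  have hinv : ∀ y : ℝ, 0 < y → C1 (Kof y) = y := by
    intro y hy
    rw [hC1, hKof]
    simp only
    rw [← Real.rpow_mul (by positivity : (0:ℝ) ≤ y / a)]
    rw [one_div, inv_mul_cancel₀ heneg.ne, Real.rpow_one]
    field_simp
  -- strict antitonicity of C1 on (0, ∞)
  have hanti : ∀ K1 K2 : ℝ, 0 < K1 → K1 < K2 → C1 K2 < C1 K1 := by
    intro K1 K2 h1 h12
    rw [hC1, hC1]
    exact (mul_lt_mul_iff_right₀ hapos).2 (Real.rpow_lt_rpow_of_neg h1 h12 heneg)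
  have hantile : ∀ K1 K2 : ℝ, 0 < K1 → K1 ≤ K2 → C1 K2 ≤ C1 K1 := by
    intro K1 K2 h1 h12
    rw [hC1, hC1]
    exact mul_le_mul_of_nonneg_left (Real.rpow_le_rpow_of_nonpos h1 h12 heneg.le) hapos.le
  -- antitonicity of Kof
  have hKofanti : ∀ y1 y2 : ℝ, 0 < y1 → y1 < y2 → Kof y2 < Kof y1 := by
    intro y1 y2 h1 h12
    have h1e : 1 / e < 0 := one_div_neg.2 heneg
    exact Real.rpow_lt_rpow_of_neg (by positivity) ((div_lt_div_iff_of_pos_right hapos).2 h12) h1e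
  -- the three thresholds
  have hC2D : 0 < C2 - D := by linarith
  have hC2Dp : 0 < C2 + D := by linarith
  refine ⟨Kof (C2 + D), Kof C2, Kof (C2 - D), hKofpos _ hC2Dp,
    hKofanti _ _ hC2pos (by linarith), hKofanti _ _ hC2D (by linarith), hinv _ hC2pos,
    ?_, ?_, ?_, ?_⟩
  · -- K ≤ Ku : real positive roots
    intro K hK hKu z hz
    have hb : D ≤ C1 K - C2 := by
      have := hantile K (Kof (C2 + D)) hK hKu
      rw [hinv _ hC2Dp] at this
      linarith
    have hbpos : 0 < C1 K - C2 := lt_of_lt_of_le hDpos hb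
    have hdisc : 4 * c ≤ (C1 K - C2) ^ 2 := by nlinarith [hD2]
    obtain ⟨him, hre, _⟩ := quad_real_aux (C1 K - C2) c hcpos hdisc z hz
    exact ⟨him, hre hbpos⟩
  · -- Ku < K < Kf : complex, positive real part
    intro K hKu hKf z hz
    have hKpos : 0 < K := lt_trans (hKofpos _ hC2Dp) hKu
    have h1 : C1 K < C2 + D := by
      have := hanti (Kof (C2 + D)) K (hKofpos _ hC2Dp) hKu
      rwa [hinv _ hC2Dp] at this
    have h2 : C2 < C1 K := by
      have := hanti K (Kof C2) hKpos hKf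
      rwa [hinv _ hC2pos] at this
    have hdisc : (C1 K - C2) ^ 2 < 4 * c := by nlinarith [hD2]
    obtain ⟨him, hre⟩ := quad_complex_aux (C1 K - C2) c hdisc z hz
    exact ⟨him, by rw [hre]; linarith⟩
  · -- Kf < K < Ks : complex, negative real part
    intro K hKf hKs z hz
    have hKpos : 0 < K := lt_trans (hKofpos _ hC2pos) hKf
    have h1 : C1 K < C2 := by
      have := hanti (Kof C2) K (hKofpos _ hC2pos) hKf
      rwa [hinv _ hC2pos] at this
    have h2 : C2 - D < C1 K := by
      have := hanti K (Kof (C2 - D)) hKpos hKs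
      rwa [hinv _ hC2D] at this
    have hdisc : (C1 K - C2) ^ 2 < 4 * c := by nlinarith [hD2]
    obtain ⟨him, hre⟩ := quad_complex_aux (C1 K - C2) c hdisc z hz
    exact ⟨him, by rw [hre]; linarith⟩
  · -- Ks ≤ K : real negative roots
    intro K hKs z hz
    have hKpos : 0 < K := lt_of_lt_of_le (hKofpos _ hC2D) hKs
    have hb : C1 K ≤ C2 - D := by
      have := hantile (Kof (C2 - D)) K (hKofpos _ hC2D) hKs
      rwa [hinv _ hC2D] at this
    have hbneg : C1 K - C2 < 0 := by linarith
    have hdisc : 4 * c ≤ (C1 K - C2) ^ 2 := by nlinarith [hD2]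
    obtain ⟨him, _, hre⟩ := quad_real_aux (C1 K - C2) c hcpos hdisc z hz
    exact ⟨him, hre hbneg⟩
end

section
/- Let m > 1, q ∈ (0,1), m+q > 2, N ≥ 1, ν = (m-1)/(m+q-2). For every u ∈ (0,1) and K > 0, ⟨S_K(u, u-1), (1,-1)⟩ ≥ (1-u)(C₁(K) - 1/ν - C₂ - (2ν-1)). In particular, if C₁(K) > 1/ν + C₂ + 2ν - 1, then the flow of S_K along the segment {(u, u-1) : u ∈ (0,1)} points in the direction of increasing u - v. -/
open Real Set

theorem stmt12 (m q N ν C2 : ℝ) (C1 : ℝ → ℝ)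
    (hm : 1 < m) (hq0 : 0 < q) (hq1 : q < 1) (hmq : 2 < m + q)
    (hN : 1 ≤ N) (hν : ν = (m - 1) / (m + q - 2))
    (hC1 : ∀ K, C1 K = Real.sqrt (m - 1) * K ^ (-(m - 1) / (m - q)) *
      (2 * (N * (m - 1) + 2) / (m - 1) ^ 2) ^ ((m + q - 2) / (2 * (m - q))))
    (hC2 : C2 = (N * (m - 1) + 2 * m + 2) / Real.sqrt (2 * (m - 1) * (N * (m - 1) + 2))) :
    ∀ K, 0 < K → ∀ u : ℝ, 0 < u → u < 1 →
      u * (u - 1) / ν -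
          (C1 K * (u - 1) - (u - 1) ^ 2 / (m - 1) + u - (max u 0) ^ (2 * ν)
            - C2 * (u - 1) * (max u 0) ^ ν)
        ≥ (1 - u) * (C1 K - 1 / ν - C2 - (2 * ν - 1)) ∧
      (1 / ν + C2 + 2 * ν - 1 < C1 K →
        0 < u * (u - 1) / ν -
          (C1 K * (u - 1) - (u - 1) ^ 2 / (m - 1) + u - (max u 0) ^ (2 * ν)
            - C2 * (u - 1) * (max u 0) ^ ν)) := by
  intro K hK u hu0 hu1
  have hmax : max u 0 = u := max_eq_left hu0.le
  rw [hmax]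
  have hden : 0 < m + q - 2 := by linarith
  have hν1 : 1 < ν := by
    rw [hν, lt_div_iff₀ hden]; linarith
  have hν0 : 0 < ν := by linarith
  have hC2pos : 0 < C2 := by
    rw [hC2]
    apply div_pos (by nlinarith)
    apply Real.sqrt_pos.mpr
    have h1 : (0:ℝ) < m - 1 := by linarith
    have h2 : (0:ℝ) < N * (m - 1) + 2 := by nlinarith
    positivity
  have hBle : u ^ ν ≤ 1 := Real.rpow_le_one hu0.le hu1.le hν0.le
  have hber : 1 + 2 * ν * (u - 1) ≤ u ^ (2 * ν) := by
    have h := one_add_mul_self_le_rpow_one_add (s := u - 1) (by linarith) (p := 2 * ν) (by linarith)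
    have : (1 : ℝ) + (u - 1) = u := by ring
    rwa [this] at h
  have h4 : C2 * (u - 1) ≤ C2 * (u - 1) * u ^ ν := by
    have hnn : 0 ≤ C2 * (1 - u) * (1 - u ^ ν) :=
      mul_nonneg (mul_nonneg hC2pos.le (by linarith)) (by linarith)
    nlinarith [hnn]
  have e1 : u * (u - 1) / ν = (u - 1) / ν + (u - 1) ^ 2 / ν := by
    field_simp; ring
  have e2 : (0:ℝ) ≤ (u - 1) ^ 2 / ν := div_nonneg (sq_nonneg _) hν0.le
  have e3 : (0:ℝ) ≤ (u - 1) ^ 2 / (m - 1) := div_nonneg (sq_nonneg _) (by linarith)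
  have key : u * (u - 1) / ν -
          (C1 K * (u - 1) - (u - 1) ^ 2 / (m - 1) + u - u ^ (2 * ν)
            - C2 * (u - 1) * u ^ ν)
        ≥ (1 - u) * (C1 K - 1 / ν - C2 - (2 * ν - 1)) := by
    have hr : (1 - u) * (C1 K - 1 / ν - C2 - (2 * ν - 1)) =
        -(C1 K * (u - 1)) + (u - 1) / ν + C2 * (u - 1) + (2 * ν - 1) * (u - 1) := by
      field_simp; ring
    rw [hr, e1]
    linarith
  exact ⟨key, fun hlt => lt_of_lt_of_le (by nlinarith) key⟩
end

section
/- Let m > 1, q ∈ (0,1), ν > 1, K > 0, μ = m+q-2 > 0, and let Z : [0,∞) → (0, δ₀) be a C¹ solution of dZ/dη = -(μK/(m-1))Z² + μZh₀(Z) - (2μ/(m-1))Z^{ν+1}, where h₀ ∈ C¹(-δ₀, δ₀) satisfies h₀(0) = h₀'(0) = 0 and |h₀(ζ)| ≤ K|ζ|/(2(m-1)). Then Z is decreasing, Z(η) → 0 as η → ∞, Z⁻²·(dZ/dη)(η) → -μK/(m-1) as η → ∞, and Z^ν ∈ L¹(0,∞). -/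
/-!
Dropping the harmless terms, the equation gives `Z' ≤ -a Z²` with `a = μK/(2(m-1))`, since the
bound on `h₀` absorbs half of the quadratic term and the `Z^{ν+1}` term has a sign. Hence
`(1/Z)' ≥ a`, so `1/Z` grows at least linearly: `Z(η) ≤ 1/(1/Z(0) + aη)`, which gives the decay,
the monotonicity and the integrability of `Z^ν` for `ν > 1`. Once `Z → 0`, the ratio `Z'/Z²`
tends to `-μK/(m-1)` because `h₀(Z)/Z → h₀'(0) = 0` and `Z^{ν-1} → 0`.
-/

open Real Filter Set Topology MeasureTheory

section RiccatiComparison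

variable {Z Z' : ℝ → ℝ} {a t₀ : ℝ}

theorem strictAntiOn_of_hasDerivAt_le_neg_mul_sq (ha : 0 < a)
    (hpos : ∀ t ∈ Ici t₀, 0 < Z t) (hderiv : ∀ t ∈ Ici t₀, HasDerivAt Z (Z' t) t)
    (hle : ∀ t ∈ Ici t₀, Z' t ≤ -a * Z t ^ 2) : StrictAntiOn Z (Ici t₀) := by
  refine strictAntiOn_of_hasDerivWithinAt_neg (convex_Ici t₀)
    (fun t ht => (hderiv t ht).continuousAt.continuousWithinAt)
    (fun t ht => (hderiv t (interior_subset ht)).hasDerivWithinAt) fun t ht => ?_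
  have ht' := interior_subset ht
  have := hpos t ht'
  have : 0 < a * Z t ^ 2 := by positivity
  linarith [hle t ht']

theorem inv_add_mul_sub_le_inv (hpos : ∀ t ∈ Ici t₀, 0 < Z t)
    (hderiv : ∀ t ∈ Ici t₀, HasDerivAt Z (Z' t) t) (hle : ∀ t ∈ Ici t₀, Z' t ≤ -a * Z t ^ 2)
    {t : ℝ} (ht : t₀ ≤ t) : (Z t₀)⁻¹ + a * (t - t₀) ≤ (Z t)⁻¹ := by
  have hinv : ∀ s ∈ Ici t₀, HasDerivAt (fun s => (Z s)⁻¹) (-Z' s / Z s ^ 2) s :=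
    fun s hs => (hderiv s hs).inv (hpos s hs).ne'
  have hslope : ∀ s ∈ Ici t₀, a ≤ -Z' s / Z s ^ 2 := fun s hs => by
    rw [le_div_iff₀ (pow_pos (hpos s hs) 2)]
    linarith [hle s hs]
  have := (convex_Ici t₀).mul_sub_le_image_sub_of_le_deriv
    (fun s hs => (hinv s hs).continuousAt.continuousWithinAt)
    (fun s hs => (hinv s (interior_subset hs)).differentiableAt.differentiableWithinAt)
    (fun s hs => (hinv s (interior_subset hs)).deriv ▸ hslope s (interior_subset hs))
    t₀ self_mem_Ici t ht ht
  linarith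

theorem le_inv_add_mul_sub (ha : 0 ≤ a) (hpos : ∀ t ∈ Ici t₀, 0 < Z t)
    (hderiv : ∀ t ∈ Ici t₀, HasDerivAt Z (Z' t) t) (hle : ∀ t ∈ Ici t₀, Z' t ≤ -a * Z t ^ 2)
    {t : ℝ} (ht : t₀ ≤ t) : Z t ≤ ((Z t₀)⁻¹ + a * (t - t₀))⁻¹ := by
  have h₀ := hpos t₀ self_mem_Ici
  have hpos' : 0 < (Z t₀)⁻¹ + a * (t - t₀) := by
    have := mul_nonneg ha (sub_nonneg.2 ht)
    positivity
  rw [← inv_inv (Z t)]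
  exact inv_anti₀ hpos' (inv_add_mul_sub_le_inv hpos hderiv hle ht)

theorem tendsto_zero_of_hasDerivAt_le_neg_mul_sq (ha : 0 < a)
    (hpos : ∀ t ∈ Ici t₀, 0 < Z t) (hderiv : ∀ t ∈ Ici t₀, HasDerivAt Z (Z' t) t)
    (hle : ∀ t ∈ Ici t₀, Z' t ≤ -a * Z t ^ 2) : Tendsto Z atTop (𝓝 0) := by
  have hbound : Tendsto (fun t => ((Z t₀)⁻¹ + a * (t - t₀))⁻¹) atTop (𝓝 0) :=
    tendsto_inv_atTop_zero.comp <| tendsto_atTop_add_const_left _ _ <|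
      (tendsto_atTop_add_const_right _ _ tendsto_id).const_mul_atTop ha
  refine tendsto_of_tendsto_of_tendsto_of_le_of_le' tendsto_const_nhds hbound ?_ ?_
  · filter_upwards [eventually_ge_atTop t₀] with t ht using (hpos t ht).le
  · filter_upwards [eventually_ge_atTop t₀] with t ht
    exact le_inv_add_mul_sub ha.le hpos hderiv hle ht

theorem integrableOn_rpow_of_hasDerivAt_le_neg_mul_sq {ν : ℝ} (ha : 0 < a) (hν : 1 < ν)
    (hpos : ∀ t ∈ Ici t₀, 0 < Z t) (hderiv : ∀ t ∈ Ici t₀, HasDerivAt Z (Z' t) t)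
    (hle : ∀ t ∈ Ici t₀, Z' t ≤ -a * Z t ^ 2) : IntegrableOn (fun t => Z t ^ ν) (Ici t₀) := by
  have h₀ := hpos t₀ self_mem_Ici
  have hc : 0 < (a * Z t₀)⁻¹ := by positivity
  set b := (a * Z t₀)⁻¹ - t₀
  have hmajor : IntegrableOn (fun t => a ^ (-ν) * (t + b) ^ (-ν)) (Ioi t₀) :=
    (integrableOn_add_rpow_Ioi_of_lt (by linarith) (by simp only [b]; linarith)).const_mul _
  have hcont : ContinuousOn (fun t => Z t ^ ν) (Ioi t₀) :=
    ContinuousOn.rpow_const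
      (fun t ht => (hderiv t (Ioi_subset_Ici_self ht)).continuousAt.continuousWithinAt)
      fun t ht => Or.inl (hpos t (Ioi_subset_Ici_self ht)).ne'
  rw [integrableOn_Ici_iff_integrableOn_Ioi]
  refine hmajor.mono' (hcont.aestronglyMeasurable measurableSet_Ioi) ?_
  rw [ae_restrict_iff' measurableSet_Ioi]
  filter_upwards with t ht
  have hZt := hpos t (Ioi_subset_Ici_self ht)
  have htb : 0 < t + b := by simp only [b]; linarith [mem_Ioi.1 ht]
  have hlin : (Z t₀)⁻¹ + a * (t - t₀) = a * (t + b) := by simp only [b]; field_simp; ring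
  rw [norm_of_nonneg (rpow_nonneg hZt.le _)]
  calc Z t ^ ν ≤ ((Z t₀)⁻¹ + a * (t - t₀))⁻¹ ^ ν :=
        rpow_le_rpow hZt.le (le_inv_add_mul_sub ha.le hpos hderiv hle (le_of_lt ht)) (by linarith)
    _ = a ^ (-ν) * (t + b) ^ (-ν) := by
        rw [hlin, mul_inv, mul_rpow (inv_nonneg.2 ha.le) (inv_nonneg.2 htb.le),
          inv_rpow ha.le, inv_rpow htb.le, rpow_neg ha.le, rpow_neg htb.le]

end RiccatiComparison

noncomputable def reducedField (μ m K ν : ℝ) (h₀ : ℝ → ℝ) (z : ℝ) : ℝ :=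
  -(μ * K / (m - 1)) * z ^ 2 + μ * z * h₀ z - (2 * μ / (m - 1)) * z ^ (ν + 1)

section ReducedField

variable {μ m K ν : ℝ} {h₀ : ℝ → ℝ}

theorem reducedField_le (hμ : 0 < μ) (hm : 1 < m) {z : ℝ} (hz : 0 < z)
    (hbound : |h₀ z| ≤ K * |z| / (2 * (m - 1))) :
    reducedField μ m K ν h₀ z ≤ -(μ * K / (m - 1) / 2) * z ^ 2 := by
  have hm1 : 0 < m - 1 := by linarith
  rw [abs_of_pos hz] at hbound
  have hmid : μ * z * h₀ z ≤ μ * K / (m - 1) / 2 * z ^ 2 :=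
    calc μ * z * h₀ z ≤ μ * z * (K * z / (2 * (m - 1))) :=
          mul_le_mul_of_nonneg_left ((le_abs_self _).trans hbound) (by positivity)
      _ = μ * K / (m - 1) / 2 * z ^ 2 := by field_simp
  have hlast : 0 < 2 * μ / (m - 1) * z ^ (ν + 1) := by positivity
  unfold reducedField
  linarith

theorem reducedField_div_sq {z : ℝ} (hz : 0 < z) :
    reducedField μ m K ν h₀ z / z ^ 2 =
      -(μ * K / (m - 1)) + μ * (h₀ z / z) - 2 * μ / (m - 1) * z ^ (ν - 1) := by
  have hpow : z ^ (ν + 1) = z ^ (ν - 1) * z ^ 2 := by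
    rw [← rpow_natCast z 2, ← rpow_add hz]
    congr 1
    ring
  unfold reducedField
  rw [hpow]
  field_simp

theorem tendsto_reducedField_div_sq (hν : 1 < ν) (hh₀ : HasDerivAt h₀ 0 0) (hh₀0 : h₀ 0 = 0) :
    Tendsto (fun z => reducedField μ m K ν h₀ z / z ^ 2) (𝓝[>] 0) (𝓝 (-(μ * K / (m - 1)))) := by
  have hslope : Tendsto (fun z => h₀ z / z) (𝓝[>] 0) (𝓝 0) :=
    (hh₀.tendsto_slope.mono_left (nhdsGT_le_nhdsNE 0)).congr fun z => by
      rw [slope_def_field, hh₀0, sub_zero, sub_zero]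
  have hrpow : Tendsto (fun z : ℝ => z ^ (ν - 1)) (𝓝[>] 0) (𝓝 0) := by
    have := (continuousAt_rpow_const 0 (ν - 1) (Or.inr (by linarith))).tendsto
    rw [zero_rpow (by linarith)] at this
    exact this.mono_left nhdsWithin_le_nhds
  have hlim := (tendsto_const_nhds (x := -(μ * K / (m - 1)))).add (hslope.const_mul μ) |>.sub
    (hrpow.const_mul (2 * μ / (m - 1)))
  simp only [mul_zero, add_zero, sub_zero] at hlim
  refine hlim.congr' ?_
  filter_upwards [self_mem_nhdsWithin] with z hz
  exact (reducedField_div_sq hz).symm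

end ReducedField

theorem stmt15_general (m μ ν K δ₀ : ℝ) (h₀ Z : ℝ → ℝ)
    (hm : 1 < m) (hν : 1 < ν) (hK : 0 < K)
    (hμpos : 0 < μ) (hδ : 0 < δ₀)
    (hreg : ContDiffOn ℝ 1 h₀ (Set.Ioo (-δ₀) δ₀))
    (hh0 : h₀ 0 = 0) (hh0' : deriv h₀ 0 = 0)
    (hbound : ∀ ζ ∈ Set.Ioo (-δ₀) δ₀, |h₀ ζ| ≤ K * |ζ| / (2 * (m - 1)))
    (hZ : ∀ η ∈ Set.Ici (0 : ℝ), Z η ∈ Set.Ioo (0 : ℝ) δ₀)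
    (hode : ∀ η ∈ Set.Ici (0 : ℝ),
      HasDerivAt Z
        (-(μ * K / (m - 1)) * (Z η) ^ 2 + μ * Z η * h₀ (Z η)
          - (2 * μ / (m - 1)) * (Z η) ^ (ν + 1)) η) :
    StrictAntiOn Z (Set.Ici 0) ∧
      Filter.Tendsto Z Filter.atTop (nhds 0) ∧
      Filter.Tendsto (fun η => deriv Z η / (Z η) ^ 2) Filter.atTop
        (nhds (-(μ * K / (m - 1)))) ∧
      MeasureTheory.IntegrableOn (fun η => Z η ^ ν) (Set.Ici 0) := by
  have ha : 0 < μ * K / (m - 1) / 2 := by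
    have := sub_pos.2 hm
    positivity
  have hpos : ∀ η ∈ Ici (0 : ℝ), 0 < Z η := fun η hη => (hZ η hη).1
  have hderiv : ∀ η ∈ Ici (0 : ℝ), HasDerivAt Z (reducedField μ m K ν h₀ (Z η)) η := hode
  have hle : ∀ η ∈ Ici (0 : ℝ),
      reducedField μ m K ν h₀ (Z η) ≤ -(μ * K / (m - 1) / 2) * Z η ^ 2 :=
    fun η hη => reducedField_le hμpos hm (hpos η hη)
      (hbound _ ⟨by linarith [hpos η hη], (hZ η hη).2⟩)
  have hlim := tendsto_zero_of_hasDerivAt_le_neg_mul_sq ha hpos hderiv hle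
  have hh₀ : HasDerivAt h₀ 0 0 := by
    have h0mem : (0 : ℝ) ∈ Ioo (-δ₀) δ₀ := ⟨by linarith, hδ⟩
    have := ((hreg.differentiableOn one_ne_zero 0 h0mem).differentiableAt
      (isOpen_Ioo.mem_nhds h0mem)).hasDerivAt
    rwa [hh0'] at this
  refine ⟨strictAntiOn_of_hasDerivAt_le_neg_mul_sq ha hpos hderiv hle, hlim, ?_,
    integrableOn_rpow_of_hasDerivAt_le_neg_mul_sq ha hν hpos hderiv hle⟩
  have hlim' : Tendsto Z atTop (𝓝[>] 0) := tendsto_nhdsWithin_iff.2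
    ⟨hlim, eventually_atTop.2 ⟨0, fun η hη => hpos η hη⟩⟩
  refine ((tendsto_reducedField_div_sq hν hh₀ hh0).comp hlim').congr' ?_
  filter_upwards [eventually_ge_atTop 0] with η hη
  rw [Function.comp_apply, (hderiv η hη).deriv]

theorem stmt15 (m q μ ν K δ₀ : ℝ) (h₀ Z : ℝ → ℝ)
    (hm : 1 < m) (hq0 : 0 < q) (hq1 : q < 1) (hν : 1 < ν) (hK : 0 < K)
    (hμ : μ = m + q - 2) (hμpos : 0 < μ) (hδ : 0 < δ₀)
    (hreg : ContDiffOn ℝ 1 h₀ (Set.Ioo (-δ₀) δ₀))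
    (hh0 : h₀ 0 = 0) (hh0' : deriv h₀ 0 = 0)
    (hbound : ∀ ζ ∈ Set.Ioo (-δ₀) δ₀, |h₀ ζ| ≤ K * |ζ| / (2 * (m - 1)))
    (hZ : ∀ η ∈ Set.Ici (0 : ℝ), Z η ∈ Set.Ioo (0 : ℝ) δ₀)
    (hode : ∀ η ∈ Set.Ici (0 : ℝ),
      HasDerivAt Z
        (-(μ * K / (m - 1)) * (Z η) ^ 2 + μ * Z η * h₀ (Z η)
          - (2 * μ / (m - 1)) * (Z η) ^ (ν + 1)) η) :
    StrictAntiOn Z (Set.Ici 0) ∧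
      Filter.Tendsto Z Filter.atTop (nhds 0) ∧
      Filter.Tendsto (fun η => deriv Z η / (Z η) ^ 2) Filter.atTop
        (nhds (-(μ * K / (m - 1)))) ∧
      MeasureTheory.IntegrableOn (fun η => Z η ^ ν) (Set.Ici 0) :=
  stmt15_general m μ ν K δ₀ h₀ Z hm hν hK hμpos hδ hreg hh0 hh0' hbound hZ hode
end
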